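/- arXiv:1601.04737 — 3 statements merged into one kernel-verified Lean document; each statement's English description precedes it below -/
import Mathlib

section
/- Let F : ℝ^p → ℝ be twice continuously differentiable with ∇²F L-Lipschitz (‖∇²F(x) − ∇²F(y)‖ ≤ L‖x−y‖). Let 0 < ε₁ < 1, 0 < β < 1/2 with 1 − 2ε₁ − 2(1−ε₁)β > 0, γ > 0, K̂ ≥ γ, κ̃ = K̂/γ, and set q = 3(1−ε₁)γ²(1 − 2ε₁ − 2(1−ε₁)β). Suppose ε₂ > 0 satisfies ε₂ ≤ 3√(1−ε₁) γ² (1 − 2ε₁ − 2(1−ε₁)β)² / (8 L √κ̃), and define q₁ = (q − √(q² − 24(1−ε₁)^{3/2} γ² L ε₂ √κ̃))/(2L) and q₂ = (q + √(q² − 24(1−ε₁)^{3/2} γ² L ε₂ √κ̃))/(2L). Let x ∈ ℝ^p and H be a symmetric matrix with (1−ε₁)γ·I ⪯ H ⪯ K̂·I and ‖H − ∇²F(x)‖ ≤ ε₁γ, and let g ∈ ℝ^p satisfy ‖∇F(x) − g‖ ≤ ε₂. If q₁ ≤ ‖g‖ ≤ q₂ and p = −H⁻¹g, then F(x + p) ≤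 F(x) + β pᵀg; i.e., the unit step size α = 1 satisfies the Armijo condition with respect to g. -/
/-!
Taylor's theorem with an `L`-Lipschitz Hessian, together with `‖∇F(x) - g‖ ≤ ε₂` and
`‖H - ∇²F(x)‖ ≤ ε₁γ`, reduces the Armijo condition to the cubic estimate
`ε₂‖p‖ + ε₁γ‖p‖²/2 + L‖p‖³/6 ≤ (1/2 - β)⟪Hp, p⟫`.

Put `μ = (1 - ε₁)γ` and write `⟪Hp, p⟫ = μ r²`, so that `‖p‖ ≤ r`. As `‖g‖ = ‖Hp‖`, the spectral
bounds on `H` give `μ r ≤ ‖g‖ ≤ √((1 - ε₁)κ̃) γ r`. The hypothesis `q₁ ≤ ‖g‖ ≤ q₂` says that a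
quadratic in `‖g‖` is nonpositive; across this sandwich it becomes `L r² - 3cγ r + 6ε₂ ≤ 0` with
`c = 1 - 2ε₁ - 2(1 - ε₁)β`, which is the cubic estimate at radius `r ≥ ‖p‖`.
-/

open scoped RealInnerProductSpace

/-- The Hessian of `F : ℝ^d → ℝ` at `x`, as a continuous linear map,
obtained as the (Fréchet) derivative of the gradient. -/
noncomputable def hess {d : ℕ} (F : EuclideanSpace ℝ (Fin d) → ℝ)
    (x : EuclideanSpace ℝ (Fin d)) :
    EuclideanSpace ℝ (Fin d) →L[ℝ] EuclideanSpace ℝ (Fin d) :=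
  fderiv ℝ (gradient F) x

theorem norm_sub_le_of_norm_deriv_le_mul_pow {E : Type*} [NormedAddCommGroup E]
    [NormedSpace ℝ E] {f f' : ℝ → E} {C : ℝ} {n : ℕ}
    (hf : ∀ τ, HasDerivAt f (f' τ) τ) (hf' : ∀ τ, 0 ≤ τ → ‖f' τ‖ ≤ C * τ ^ n)
    {τ : ℝ} (hτ : 0 ≤ τ) : ‖f τ - f 0‖ ≤ C * τ ^ (n + 1) / (n + 1) := by
  have hB : ∀ σ : ℝ, HasDerivAt (fun σ => C * σ ^ (n + 1) / (n + 1)) (C * σ ^ n) σ := by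
    intro σ
    refine (((hasDerivAt_pow (n + 1) σ).const_mul C).div_const ((n : ℝ) + 1)).congr_deriv ?_
    push_cast
    field_simp
  refine image_norm_le_of_norm_deriv_right_le_deriv_boundary (f := fun σ => f σ - f 0)
    (fun σ _ => ((hf σ).continuousAt.sub continuousAt_const).continuousWithinAt)
    (fun σ _ => ((hf σ).sub_const (f 0)).hasDerivWithinAt) (by simp) hB
    (fun σ hσ => hf' σ hσ.1) ⟨hτ, le_rfl⟩

theorem hasDerivAt_add_smul {E : Type*} [NormedAddCommGroup E] [NormedSpace ℝ E] (x p : E)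
    (τ : ℝ) : HasDerivAt (fun σ : ℝ => x + σ • p) p τ := by
  simpa using ((hasDerivAt_id τ).smul_const p).const_add x

section Taylor

variable {d : ℕ} {F : EuclideanSpace ℝ (Fin d) → ℝ}

theorem hasFDerivAt_gradient_hess (hF : ContDiff ℝ 2 F) (y : EuclideanSpace ℝ (Fin d)) :
    HasFDerivAt (gradient F) (hess F y) y := by
  have h : ContDiff ℝ 1 (gradient F) :=
    (InnerProductSpace.toDual ℝ _).symm.contDiff.comp (hF.fderiv_right (by norm_num))
  exact (h.differentiable one_ne_zero y).hasFDerivAt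

theorem hasDerivAt_apply_add_smul (hF : Differentiable ℝ F) (x p : EuclideanSpace ℝ (Fin d))
    (τ : ℝ) : HasDerivAt (fun σ : ℝ => F (x + σ • p)) ⟪gradient F (x + τ • p), p⟫ τ := by
  rw [inner_gradient_left]
  exact (hF (x + τ • p)).hasFDerivAt.comp_hasDerivAt τ (hasDerivAt_add_smul x p τ)

theorem hasDerivAt_gradient_add_smul (hF : ContDiff ℝ 2 F) (x p : EuclideanSpace ℝ (Fin d))
    (τ : ℝ) :
    HasDerivAt (fun σ : ℝ => gradient F (x + σ • p)) (hess F (x + τ • p) p) τ :=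
  (hasFDerivAt_gradient_hess hF (x + τ • p)).comp_hasDerivAt (f := fun σ : ℝ => x + σ • p) τ
    (hasDerivAt_add_smul x p τ)

theorem norm_gradient_add_smul_sub_le (hF : ContDiff ℝ 2 F) {L : ℝ}
    (hLip : ∀ a b, ‖hess F a - hess F b‖ ≤ L * ‖a - b‖) (x p : EuclideanSpace ℝ (Fin d))
    {τ : ℝ} (hτ : 0 ≤ τ) :
    ‖gradient F (x + τ • p) - τ • hess F x p - gradient F x‖ ≤ L * ‖p‖ ^ 2 * τ ^ 2 / 2 := by
  have h := norm_sub_le_of_norm_deriv_le_mul_pow (n := 1) (C := L * ‖p‖ ^ 2)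
    (f := fun σ => gradient F (x + σ • p) - σ • hess F x p)
    (fun σ => (hasDerivAt_gradient_add_smul hF x p σ).sub
      (by simpa using (hasDerivAt_id σ).smul_const (hess F x p)))
    (fun σ hσ => calc
      ‖hess F (x + σ • p) p - hess F x p‖ = ‖(hess F (x + σ • p) - hess F x) p‖ := rfl
      _ ≤ L * ‖x + σ • p - x‖ * ‖p‖ := (ContinuousLinearMap.le_opNorm _ _).trans
        (mul_le_mul_of_nonneg_right (hLip _ _) (norm_nonneg _))
      _ = L * ‖p‖ ^ 2 * σ ^ 1 := by
        rw [add_sub_cancel_left, norm_smul, Real.norm_of_nonneg hσ]; ring) hτ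
  norm_num at h
  exact h

theorem apply_add_le_of_lipschitz_hess (hF : ContDiff ℝ 2 F) {L : ℝ}
    (hLip : ∀ a b, ‖hess F a - hess F b‖ ≤ L * ‖a - b‖) (x p : EuclideanSpace ℝ (Fin d)) :
    F (x + p) ≤ F x + ⟪gradient F x, p⟫ + ⟪hess F x p, p⟫ / 2 + L * ‖p‖ ^ 3 / 6 := by
  have h := norm_sub_le_of_norm_deriv_le_mul_pow (n := 2) (C := L * ‖p‖ ^ 3 / 2)
    (f := fun σ => F (x + σ • p) - σ * ⟪gradient F x, p⟫ - σ ^ 2 / 2 * ⟪hess F x p, p⟫)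
    (f' := fun σ => ⟪gradient F (x + σ • p) - σ • hess F x p - gradient F x, p⟫)
    (fun σ => by
      have hquad : HasDerivAt (fun σ : ℝ => σ ^ 2 / 2) σ σ := by
        simpa using (hasDerivAt_pow 2 σ).div_const 2
      refine (((hasDerivAt_apply_add_smul (hF.differentiable (by norm_num)) x p σ).sub
        ((hasDerivAt_id σ).mul_const ⟪gradient F x, p⟫)).sub
        (hquad.mul_const ⟪hess F x p, p⟫)).congr_deriv ?_
      simp only [inner_sub_left, real_inner_smul_left]
      ring)
    (fun σ hσ => calc
      ‖⟪gradient F (x + σ • p) - σ • hess F x p - gradient F x, p⟫‖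
          ≤ ‖gradient F (x + σ • p) - σ • hess F x p - gradient F x‖ * ‖p‖ :=
        norm_inner_le_norm _ _
      _ ≤ L * ‖p‖ ^ 2 * σ ^ 2 / 2 * ‖p‖ :=
        mul_le_mul_of_nonneg_right (norm_gradient_add_smul_sub_le hF hLip x p hσ) (norm_nonneg _)
      _ = L * ‖p‖ ^ 3 / 2 * σ ^ 2 := by ring) zero_le_one
  norm_num [-inner_gradient_left] at h
  linarith [(abs_le.mp h).2]

end Taylor

theorem armijo_of_model_decrease {d : ℕ} {F : EuclideanSpace ℝ (Fin d) → ℝ}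
    {H : EuclideanSpace ℝ (Fin d) →L[ℝ] EuclideanSpace ℝ (Fin d)}
    {x p g : EuclideanSpace ℝ (Fin d)}
    {L γ ε₁ ε₂ β : ℝ} (hF : ContDiff ℝ 2 F)
    (hLip : ∀ a b, ‖hess F a - hess F b‖ ≤ L * ‖a - b‖) (hnear : ‖H - hess F x‖ ≤ ε₁ * γ)
    (hg : ‖gradient F x - g‖ ≤ ε₂) (hp : H p = -g)
    (hdec : ε₂ * ‖p‖ + ε₁ * γ * ‖p‖ ^ 2 / 2 + L * ‖p‖ ^ 3 / 6 ≤ (1 / 2 - β) * ⟪H p, p⟫) :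
    F (x + p) ≤ F x + β * ⟪p, g⟫ := by
  have hpg : ⟪p, g⟫ = -⟪H p, p⟫ := by
    rw [hp, inner_neg_left, neg_neg, real_inner_comm]
  have hgrad : ⟪gradient F x, p⟫ ≤ ⟪g, p⟫ + ε₂ * ‖p‖ := by
    have := (real_inner_le_norm (gradient F x - g) p).trans
      (mul_le_mul_of_nonneg_right hg (norm_nonneg p))
    rw [inner_sub_left] at this
    linarith
  have hhess : ⟪hess F x p, p⟫ ≤ ⟪H p, p⟫ + ε₁ * γ * ‖p‖ ^ 2 := by
    have := (real_inner_le_norm ((hess F x - H) p) p).trans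
      (mul_le_mul_of_nonneg_right ((hess F x - H).le_opNorm p) (norm_nonneg p))
    rw [sub_apply, inner_sub_left, norm_sub_rev] at this
    nlinarith [norm_nonneg p]
  have := apply_add_le_of_lipschitz_hess hF hLip x p
  rw [hpg]
  linarith [real_inner_comm p g]

theorem norm_apply_sq_le_mul_inner {E : Type*} [NormedAddCommGroup E] [InnerProductSpace ℝ E]
    {H : E →L[ℝ] E} {K : ℝ} (hK : 0 < K) (hsym : ∀ u v, ⟪H u, v⟫ = ⟪u, H v⟫)
    (hpos : ∀ v, 0 ≤ ⟪H v, v⟫) (hle : ∀ v, ⟪H v, v⟫ ≤ K * ‖v‖ ^ 2) (p : E) :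
    ‖H p‖ ^ 2 ≤ K * ⟪H p, p⟫ := by
  have hexpand : ⟪H (K • p - H p), K • p - H p⟫
      = K ^ 2 * ⟪H p, p⟫ - 2 * K * ‖H p‖ ^ 2 + ⟪H (H p), H p⟫ := by
    simp only [map_sub, map_smul, inner_sub_left, inner_sub_right, real_inner_smul_left,
      real_inner_smul_right, hsym (H p) p, real_inner_self_eq_norm_sq]
    ring
  have h₁ := hpos (K • p - H p)
  have h₂ := hle (H p)
  rw [hexpand] at h₁
  nlinarith

theorem quadratic_nonpos_of_mem_Icc_roots {a b c x : ℝ} (ha : 0 < a) (hD : 0 ≤ discrim a b c)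
    (h₁ : (-b - √(discrim a b c)) / (2 * a) ≤ x) (h₂ : x ≤ (-b + √(discrim a b c)) / (2 * a)) :
    a * (x * x) + b * x + c ≤ 0 := by
  rw [div_le_iff₀ (by positivity)] at h₁
  rw [le_div_iff₀ (by positivity)] at h₂
  have hsq : (2 * a * x + b) ^ 2 ≤ discrim a b c := by
    rw [← Real.sq_sqrt hD]
    exact sq_le_sq' (by linarith) (by linarith)
  have h4a : 4 * a * (a * (x * x) + b * x + c) ≤ 0 := by
    rw [discrim] at hsq
    linarith
  nlinarith

-- The bound on `ε₂` is exactly nonnegativity of the discriminant.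
theorem scaled_quadratic_nonpos_of_mem_Icc {L γ ε₂ a s k c q G : ℝ} (hL : 0 < L) (hk : 0 < k)
    (hs₀ : 0 ≤ s) (hs : s ^ 2 = a) (hq : q = 3 * a * γ ^ 2 * c)
    (hε₂ : ε₂ ≤ 3 * s * γ ^ 2 * c ^ 2 / (8 * L * k))
    (h₁ : (q - √(q ^ 2 - 24 * s ^ 3 * γ ^ 2 * L * ε₂ * k)) / (2 * L) ≤ G)
    (h₂ : G ≤ (q + √(q ^ 2 - 24 * s ^ 3 * γ ^ 2 * L * ε₂ * k)) / (2 * L)) :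
    L * G ^ 2 - 3 * c * γ * (a * γ) * G + 6 * ε₂ * (a * γ) * (s * k * γ) ≤ 0 := by
  subst hs hq
  have hD : discrim L (-(3 * s ^ 2 * γ ^ 2 * c)) (6 * s ^ 3 * k * γ ^ 2 * ε₂)
      = (3 * s ^ 2 * γ ^ 2 * c) ^ 2 - 24 * s ^ 3 * γ ^ 2 * L * ε₂ * k := by
    rw [discrim]; ring
  have hdisc : 0 ≤ discrim L (-(3 * s ^ 2 * γ ^ 2 * c)) (6 * s ^ 3 * k * γ ^ 2 * ε₂) := by
    rw [le_div_iff₀ (by positivity)] at hε₂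
    rw [hD]
    nlinarith [mul_le_mul_of_nonneg_left hε₂ (by positivity : (0 : ℝ) ≤ 3 * s ^ 3 * γ ^ 2)]
  have hQ := quadratic_nonpos_of_mem_Icc_roots (x := G) hL hdisc
    (by rwa [hD, neg_neg]) (by rwa [hD, neg_neg])
  linear_combination hQ

theorem quadratic_nonpos_of_scaled_quadratic_nonpos {L b e μ ν r G : ℝ} (hμ : 0 < μ)
    (hL : 0 ≤ L) (he : 0 ≤ e) (hr : 0 ≤ r) (hG : 0 < G)
    (hQ : L * G ^ 2 - b * μ * G + e * μ * ν ≤ 0) (h₁ : μ * r ≤ G) (h₂ : G ≤ ν * r) :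
    L * r ^ 2 - b * r + e ≤ 0 := by
  have key : μ * G ^ 2 * (L * r ^ 2 - b * r + e)
      = r * G * (L * G ^ 2 - b * μ * G + e * μ * ν) + L * r * G ^ 2 * (μ * r - G)
        + e * μ * G * (G - ν * r) := by ring
  have hnonpos : μ * G ^ 2 * (L * r ^ 2 - b * r + e) ≤ 0 := by
    rw [key]
    have t₁ : r * G * (L * G ^ 2 - b * μ * G + e * μ * ν) ≤ 0 :=
      mul_nonpos_of_nonneg_of_nonpos (by positivity) hQ
    have t₂ : L * r * G ^ 2 * (μ * r - G) ≤ 0 :=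
      mul_nonpos_of_nonneg_of_nonpos (by positivity) (by linarith)
    have t₃ : e * μ * G * (G - ν * r) ≤ 0 :=
      mul_nonpos_of_nonneg_of_nonpos (by positivity) (by linarith)
    linarith
  exact nonpos_of_mul_nonpos_right hnonpos (by positivity)

theorem cubic_le_of_quadratic_nonpos {L b e r t : ℝ} (hL : 0 ≤ L) (he : 0 ≤ e)
    (hφ : L * r ^ 2 - b * r + e ≤ 0) (ht : 0 ≤ t) (htr : t ≤ r) :
    e * t + L * t ^ 3 ≤ b * r ^ 2 :=
  calc e * t + L * t ^ 3 = t * (e + L * t ^ 2) := by ring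
    _ ≤ r * (e + L * r ^ 2) := by have := ht.trans htr; gcongr
    _ ≤ r * (b * r) := mul_le_mul_of_nonneg_left (by linarith) (ht.trans htr)
    _ = b * r ^ 2 := by ring

theorem mul_cubic_le_of_scaled_quadratic_nonpos {L b e μ ν K t h G : ℝ} (hμ : 0 < μ)
    (hν : 0 ≤ ν) (hνK : ν ^ 2 = μ * K) (hL : 0 ≤ L) (he : 0 ≤ e) (ht : 0 ≤ t) (hG : 0 ≤ G)
    (hQ : L * G ^ 2 - b * μ * G + e * μ * ν ≤ 0)
    (hth : μ * t ^ 2 ≤ h) (hhG : h ≤ G * t) (hGh : G ^ 2 ≤ K * h) :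
    μ * (e * t + L * t ^ 3) ≤ b * h := by
  have hh : 0 ≤ h := le_trans (by positivity) hth
  obtain ⟨r, hr, rfl⟩ : ∃ r, 0 ≤ r ∧ μ * r ^ 2 = h :=
    ⟨√(h / μ), Real.sqrt_nonneg _, by rw [Real.sq_sqrt (by positivity)]; field_simp⟩
  have htr : t ≤ r :=
    (pow_le_pow_iff_left₀ ht hr two_ne_zero).mp (le_of_mul_le_mul_left hth hμ)
  rcases hr.eq_or_lt with rfl | hr0
  · obtain rfl : t = 0 := le_antisymm htr ht
    simp
  have hGr : μ * r ≤ G := le_of_mul_le_mul_right (by nlinarith) hr0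
  have hrG : G ≤ ν * r :=
    (pow_le_pow_iff_left₀ hG (by positivity) two_ne_zero).mp
      (hGh.trans_eq (by rw [mul_pow, hνK]; ring))
  have hφ := quadratic_nonpos_of_scaled_quadratic_nonpos hμ hL he hr0.le
    ((mul_pos hμ hr0).trans_le hGr) hQ hGr hrG
  calc μ * (e * t + L * t ^ 3) ≤ μ * (b * r ^ 2) :=
        mul_le_mul_of_nonneg_left (cubic_le_of_quadratic_nonpos hL he hφ ht htr) hμ.le
    _ = b * (μ * r ^ 2) := by ring

theorem model_decrease_of_cubic_le {ε₁ ε₂ β γ L t h : ℝ} (hε₁ : 0 ≤ ε₁) (hε₁1 : ε₁ < 1)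
    (hγ : 0 < γ) (hth : (1 - ε₁) * γ * t ^ 2 ≤ h)
    (hcub : (1 - ε₁) * γ * (6 * ε₂ * t + L * t ^ 3)
      ≤ 3 * (1 - 2 * ε₁ - 2 * (1 - ε₁) * β) * γ * h) :
    ε₂ * t + ε₁ * γ * t ^ 2 / 2 + L * t ^ 3 / 6 ≤ (1 / 2 - β) * h := by
  have hcub' : (1 - ε₁) * (6 * ε₂ * t + L * t ^ 3)
      ≤ 3 * (1 - 2 * ε₁ - 2 * (1 - ε₁) * β) * h := by
    nlinarith
  have := mul_le_mul_of_nonneg_left hth (by linarith : 0 ≤ 3 * ε₁)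
  nlinarith

theorem stmt_11_general {d : ℕ} (F : EuclideanSpace ℝ (Fin d) → ℝ)
    (γ Khat L ε₁ ε₂ β q q₁ q₂ : ℝ) (x p g : EuclideanSpace ℝ (Fin d))
    (H : EuclideanSpace ℝ (Fin d) →L[ℝ] EuclideanSpace ℝ (Fin d))
    -- `F` is twice continuously differentiable with `L`-Lipschitz Hessian, `L > 0`
    (hFC : ContDiff ℝ 2 F) (hL : 0 < L)
    (hLip : ∀ a b, ‖hess F a - hess F b‖ ≤ L * ‖a - b‖)
    (hε₁ : 0 < ε₁) (hε₁1 : ε₁ < 1)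
    (hγ : 0 < γ) (hKγ : γ ≤ Khat)
    -- `q = 3(1-ε₁)γ²(1 - 2ε₁ - 2(1-ε₁)β)`
    (hq : q = 3 * (1 - ε₁) * γ ^ 2 * (1 - 2 * ε₁ - 2 * (1 - ε₁) * β))
    -- `ε₂ ≤ 3√(1-ε₁) γ² (1-2ε₁-2(1-ε₁)β)² / (8L√κ̃)`, `κ̃ = Khat/γ`
    (hε₂ : 0 < ε₂)
    (hε₂le : ε₂ ≤ 3 * Real.sqrt (1 - ε₁) * γ ^ 2 * (1 - 2 * ε₁ - 2 * (1 - ε₁) * β) ^ 2 /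
        (8 * L * Real.sqrt (Khat / γ)))
    -- `q₁, q₂` as defined
    (hq₁ : q₁ = (q - Real.sqrt (q ^ 2 -
        24 * (1 - ε₁) ^ ((3 : ℝ) / 2) * γ ^ 2 * L * ε₂ * Real.sqrt (Khat / γ))) / (2 * L))
    (hq₂ : q₂ = (q + Real.sqrt (q ^ 2 -
        24 * (1 - ε₁) ^ ((3 : ℝ) / 2) * γ ^ 2 * L * ε₂ * Real.sqrt (Khat / γ))) / (2 * L))
    -- `H` is symmetric with `(1-ε₁)γ I ⪯ H ⪯ Khat I` and `‖H - ∇²F(x)‖ ≤ ε₁γ`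
    (hHsym : ∀ u v, ⟪H u, v⟫ = ⟪u, H v⟫)
    (hHlow : ∀ v, (1 - ε₁) * γ * ‖v‖ ^ 2 ≤ ⟪H v, v⟫)
    (hHup : ∀ v, ⟪H v, v⟫ ≤ Khat * ‖v‖ ^ 2)
    (hnear : ‖H - hess F x‖ ≤ ε₁ * γ)
    -- `g` approximates `∇F(x)` within `ε₂`
    (hg : ‖gradient F x - g‖ ≤ ε₂)
    -- `q₁ ≤ ‖g‖ ≤ q₂`
    (hglow : q₁ ≤ ‖g‖) (hgup : ‖g‖ ≤ q₂)
    -- `p = -H⁻¹ g`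
    (hp : H p = -g) :
    -- the unit step size satisfies the Armijo condition w.r.t. `g`
    F (x + p) ≤ F x + β * ⟪p, g⟫ := by
  set s := √(1 - ε₁)
  set k := √(Khat / γ)
  have hs : s ^ 2 = 1 - ε₁ := Real.sq_sqrt (by linarith)
  have hKγ' : 0 < Khat / γ := div_pos (hγ.trans_le hKγ) hγ
  have hk : γ * k ^ 2 = Khat := by rw [Real.sq_sqrt hKγ'.le]; field_simp
  have hs3 : (1 - ε₁) ^ ((3 : ℝ) / 2) = s ^ 3 := by
    rw [Real.rpow_div_two_eq_sqrt _ (by linarith), ← Real.rpow_natCast]; norm_num; rfl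
  rw [hs3] at hq₁ hq₂
  have hQ := scaled_quadratic_nonpos_of_mem_Icc hL (Real.sqrt_pos.2 hKγ') (Real.sqrt_nonneg _)
    hs hq hε₂le (hq₁ ▸ hglow) (hq₂ ▸ hgup)
  have hμ : 0 < (1 - ε₁) * γ := mul_pos (by linarith) hγ
  have hGh := norm_apply_sq_le_mul_inner (by linarith) hHsym
    (fun v => (mul_nonneg hμ.le (sq_nonneg _)).trans (hHlow v)) hHup p
  rw [hp, norm_neg, ← hp] at hGh
  have hhG : ⟪H p, p⟫ ≤ ‖g‖ * ‖p‖ := (real_inner_le_norm _ _).trans_eq (by rw [hp, norm_neg])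
  have hν : (s * k * γ) ^ 2 = (1 - ε₁) * γ * Khat := by
    linear_combination k ^ 2 * γ ^ 2 * hs + (1 - ε₁) * γ * hk
  have hcub := mul_cubic_le_of_scaled_quadratic_nonpos hμ (by positivity) hν hL.le
    (by positivity) (norm_nonneg p) (norm_nonneg g) hQ (hHlow p) hhG hGh
  exact armijo_of_model_decrease hFC hLip hnear hg hp
    (model_decrease_of_cubic_le hε₁.le hε₁1 hγ (hHlow p) hcub)

theorem stmt_11 {d : ℕ} (F : EuclideanSpace ℝ (Fin d) → ℝ)
    (γ Khat L ε₁ ε₂ β q q₁ q₂ : ℝ) (x p g : EuclideanSpace ℝ (Fin d))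
    (H : EuclideanSpace ℝ (Fin d) →L[ℝ] EuclideanSpace ℝ (Fin d))
    -- `F` is twice continuously differentiable with `L`-Lipschitz Hessian, `L > 0`
    (hFC : ContDiff ℝ 2 F) (hL : 0 < L)
    (hLip : ∀ a b, ‖hess F a - hess F b‖ ≤ L * ‖a - b‖)
    (hε₁ : 0 < ε₁) (hε₁1 : ε₁ < 1) (hβ : 0 < β) (hβhalf : β < 1 / 2)
    (hcond : 1 - 2 * ε₁ - 2 * (1 - ε₁) * β > 0)
    (hγ : 0 < γ) (hKγ : γ ≤ Khat)
    -- `q = 3(1-ε₁)γ²(1 - 2ε₁ - 2(1-ε₁)β)`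
    (hq : q = 3 * (1 - ε₁) * γ ^ 2 * (1 - 2 * ε₁ - 2 * (1 - ε₁) * β))
    -- `ε₂ ≤ 3√(1-ε₁) γ² (1-2ε₁-2(1-ε₁)β)² / (8L√κ̃)`, `κ̃ = Khat/γ`
    (hε₂ : 0 < ε₂)
    (hε₂le : ε₂ ≤ 3 * Real.sqrt (1 - ε₁) * γ ^ 2 * (1 - 2 * ε₁ - 2 * (1 - ε₁) * β) ^ 2 /
        (8 * L * Real.sqrt (Khat / γ)))
    -- `q₁, q₂` as defined
    (hq₁ : q₁ = (q - Real.sqrt (q ^ 2 -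
        24 * (1 - ε₁) ^ ((3 : ℝ) / 2) * γ ^ 2 * L * ε₂ * Real.sqrt (Khat / γ))) / (2 * L))
    (hq₂ : q₂ = (q + Real.sqrt (q ^ 2 -
        24 * (1 - ε₁) ^ ((3 : ℝ) / 2) * γ ^ 2 * L * ε₂ * Real.sqrt (Khat / γ))) / (2 * L))
    -- `H` is symmetric with `(1-ε₁)γ I ⪯ H ⪯ Khat I` and `‖H - ∇²F(x)‖ ≤ ε₁γ`
    (hHsym : ∀ u v, ⟪H u, v⟫ = ⟪u, H v⟫)
    (hHlow : ∀ v, (1 - ε₁) * γ * ‖v‖ ^ 2 ≤ ⟪H v, v⟫)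
    (hHup : ∀ v, ⟪H v, v⟫ ≤ Khat * ‖v‖ ^ 2)
    (hnear : ‖H - hess F x‖ ≤ ε₁ * γ)
    -- `g` approximates `∇F(x)` within `ε₂`
    (hg : ‖gradient F x - g‖ ≤ ε₂)
    -- `q₁ ≤ ‖g‖ ≤ q₂`
    (hglow : q₁ ≤ ‖g‖) (hgup : ‖g‖ ≤ q₂)
    -- `p = -H⁻¹ g`
    (hp : H p = -g) :
    -- the unit step size satisfies the Armijo condition w.r.t. `g`
    F (x + p) ≤ F x + β * ⟪p, g⟫ :=
  stmt_11_general F γ Khat L ε₁ ε₂ β q q₁ q₂ x p g H hFC hL hLip hε₁ hε₁1 hγ hKγ hq hε₂ hε₂le hq₁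
    hq₂ hHsym hHlow hHup hnear hg hglow hgup hp
end

section
/- Let H be a symmetric p×p matrix with μ·I ⪯ H ⪯ K̂·I for some 0 < μ ≤ K̂, let g ∈ ℝ^p, 0 ≤ θ₁ ≤ √μ/(2√K̂), and let p ∈ ℝ^p satisfy ‖Hp + g‖ ≤ θ₁‖g‖. Then pᵀg ≤ −(1/2) gᵀH⁻¹g ≤ −‖g‖²/(2K̂). -/
/-!
Put `u = H⁻¹ g` and `r = H p + g`. Symmetry of `H` gives `pᵀg = ⟪r, u⟫ - gᵀH⁻¹g`, and the
cross term is at most `θ₁ ‖g‖ ‖u‖`. Since `μ ‖u‖² ≤ ⟪H u, u⟫ = gᵀH⁻¹g` and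
`‖g‖² = ‖H u‖² ≤ K̂ ⟪H u, u⟫`, the choice `4 K̂ θ₁² ≤ μ` makes the cross term at most
`(1/2) gᵀH⁻¹g`. The bound `‖H u‖² ≤ K̂ ⟪H u, u⟫` is positivity of `H` at `K̂ u - H u`.
-/

open scoped RealInnerProductSpace

namespace LinearMap

variable {E : Type*} [NormedAddCommGroup E] [InnerProductSpace ℝ E] {T : E →ₗ[ℝ] E}

lemma IsPositive.norm_apply_sq_le {K : ℝ} (hT : T.IsPositive) (hK : 0 < K)
    (hup : ∀ x, ⟪T x, x⟫ ≤ K * ‖x‖ ^ 2) (u : E) : ‖T u‖ ^ 2 ≤ K * ⟪T u, u⟫ := by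
  have hexpand : ⟪T (K • u - T u), K • u - T u⟫
      = K ^ 2 * ⟪T u, u⟫ - 2 * K * ‖T u‖ ^ 2 + ⟪T (T u), T u⟫ := by
    have hsymm : ⟪T (T u), u⟫ = ‖T u‖ ^ 2 := by rw [hT.isSymmetric, real_inner_self_eq_norm_sq]
    simp only [map_sub, map_smul, inner_sub_left, inner_sub_right, real_inner_smul_left,
      real_inner_smul_right, hsymm, real_inner_self_eq_norm_sq]
    ring
  have hnonneg := hT.inner_nonneg_left (K • u - T u)
  nlinarith [hup (T u)]

lemma isPositive_of_mul_norm_sq_le {μ : ℝ} (hT : T.IsSymmetric) (hμ : 0 ≤ μ)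
    (hlow : ∀ x, μ * ‖x‖ ^ 2 ≤ ⟪T x, x⟫) : T.IsPositive :=
  (T.isPositive_iff).mpr ⟨hT, fun x => (by positivity : 0 ≤ μ * ‖x‖ ^ 2).trans (hlow x)⟩

lemma IsSymmetric.inner_le_neg_half_inner_of_norm_add_le {μ K θ : ℝ} (hT : T.IsSymmetric)
    (hμ : 0 < μ) (hK : 0 < K) (hlow : ∀ x, μ * ‖x‖ ^ 2 ≤ ⟪T x, x⟫)
    (hup : ∀ x, ⟪T x, x⟫ ≤ K * ‖x‖ ^ 2) (hθ : 4 * K * θ ^ 2 ≤ μ) {g u p : E} (hu : T u = g)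
    (hp : ‖T p + g‖ ≤ θ * ‖g‖) :
    ⟪p, g⟫ ≤ -(1 / 2) * ⟪g, u⟫ := by
  subst hu
  have hg : ‖T u‖ ^ 2 ≤ K * ⟪T u, u⟫ :=
    (isPositive_of_mul_norm_sq_le hT hμ.le hlow).norm_apply_sq_le hK hup u
  have hQ : 0 ≤ ⟪T u, u⟫ := (by positivity : 0 ≤ μ * ‖u‖ ^ 2).trans (hlow u)
  have hsplit : ⟪p, T u⟫ = ⟪T p + T u, u⟫ - ⟪T u, u⟫ := by rw [inner_add_left, hT p u]; ring
  have hcross : ⟪T p + T u, u⟫ ≤ θ * ‖T u‖ * ‖u‖ :=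
    (real_inner_le_norm _ _).trans (mul_le_mul_of_nonneg_right hp (norm_nonneg u))
  have hsq : (θ * ‖T u‖ * ‖u‖) ^ 2 ≤ (⟪T u, u⟫ / 2) ^ 2 := by
    refine le_of_mul_le_mul_left ?_ hμ
    calc μ * (θ * ‖T u‖ * ‖u‖) ^ 2 = θ ^ 2 * ‖T u‖ ^ 2 * (μ * ‖u‖ ^ 2) := by ring
      _ ≤ θ ^ 2 * (K * ⟪T u, u⟫) * ⟪T u, u⟫ := by gcongr; exact hlow u
      _ = 4 * K * θ ^ 2 * (⟪T u, u⟫ / 2) ^ 2 := by ring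
      _ ≤ μ * (⟪T u, u⟫ / 2) ^ 2 := by gcongr
  have hbound := (le_abs_self _).trans (abs_le_of_sq_le_sq hsq (by positivity))
  linarith

end LinearMap

namespace Matrix

variable {n : Type*} [Fintype n] [DecidableEq n] {A : Matrix n n ℝ} {c : ℝ}

lemma PosSemidef.mul_norm_sq_le_inner_toEuclideanLin (h : (A - c • 1).PosSemidef)
    (x : EuclideanSpace ℝ n) : c * ‖x‖ ^ 2 ≤ ⟪toEuclideanLin A x, x⟫ := by
  have := (isPositive_toEuclideanLin_iff.mpr h).inner_nonneg_left x
  simp only [map_sub, map_smul, toLpLin_one, LinearMap.sub_apply, LinearMap.smul_apply,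
    LinearMap.id_apply, inner_sub_left, real_inner_smul_left, real_inner_self_eq_norm_sq] at this
  linarith

lemma PosSemidef.inner_toEuclideanLin_le_mul_norm_sq (h : (c • 1 - A).PosSemidef)
    (x : EuclideanSpace ℝ n) : ⟪toEuclideanLin A x, x⟫ ≤ c * ‖x‖ ^ 2 := by
  have := (isPositive_toEuclideanLin_iff.mpr h).inner_nonneg_left x
  simp only [map_sub, map_smul, toLpLin_one, LinearMap.sub_apply, LinearMap.smul_apply,
    LinearMap.id_apply, inner_sub_left, real_inner_smul_left, real_inner_self_eq_norm_sq] at this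
  linarith

lemma toEuclideanLin_apply_toEuclideanLin_inv (hA : IsUnit A.det) (x : EuclideanSpace ℝ n) :
    toEuclideanLin A (toEuclideanLin A⁻¹ x) = x := by
  rw [← LinearMap.comp_apply, ← toLpLin_mul_same, mul_nonsing_inv A hA, toLpLin_one,
    LinearMap.id_apply]

end Matrix

theorem stmt_14 {d : ℕ} (H : Matrix (Fin d) (Fin d) ℝ) (μ Khat θ₁ : ℝ)
    (g p : EuclideanSpace ℝ (Fin d))
    -- `H` is symmetric with `μ I ⪯ H ⪯ Khat I`, `0 < μ ≤ Khat`
    (hHsym : H.IsSymm) (hμ : 0 < μ) (hμK : μ ≤ Khat)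
    (hlow : (H - μ • (1 : Matrix (Fin d) (Fin d) ℝ)).PosSemidef)
    (hup : (Khat • (1 : Matrix (Fin d) (Fin d) ℝ) - H).PosSemidef)
    -- `0 ≤ θ₁ ≤ √μ / (2√Khat)`
    (hθ₁0 : 0 ≤ θ₁) (hθ₁le : θ₁ ≤ Real.sqrt μ / (2 * Real.sqrt Khat))
    -- `‖Hp + g‖ ≤ θ₁ ‖g‖`
    (hp : ‖Matrix.toEuclideanLin H p + g‖ ≤ θ₁ * ‖g‖) :
    -- `pᵀg ≤ -(1/2) gᵀH⁻¹g ≤ -‖g‖²/(2 Khat)`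
    ⟪p, g⟫ ≤ -(1 / 2) * ⟪g, Matrix.toEuclideanLin H⁻¹ g⟫ ∧
    -(1 / 2) * ⟪g, Matrix.toEuclideanLin H⁻¹ g⟫ ≤ -‖g‖ ^ 2 / (2 * Khat) := by
  have hK : 0 < Khat := hμ.trans_le hμK
  have hT : (Matrix.toEuclideanLin H).IsSymmetric :=
    Matrix.isSymmetric_toEuclideanLin_iff.mpr (Matrix.isHermitian_iff_isSymm.mpr hHsym)
  have hTlow := hlow.mul_norm_sq_le_inner_toEuclideanLin
  have hTup := hup.inner_toEuclideanLin_le_mul_norm_sq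
  have hH : H.PosDef :=
    sub_add_cancel H (μ • 1) ▸ Matrix.PosDef.posSemidef_add hlow (.smul .one hμ)
  have hu := Matrix.toEuclideanLin_apply_toEuclideanLin_inv
    ((Matrix.isUnit_iff_isUnit_det H).mp hH.isUnit) g
  have hθ : 4 * Khat * θ₁ ^ 2 ≤ μ := by
    have h := (Real.le_sqrt (by positivity) hμ.le).mp ((le_div_iff₀' (by positivity)).mp hθ₁le)
    rw [mul_pow, mul_pow, Real.sq_sqrt hK.le] at h
    linarith
  refine ⟨hT.inner_le_neg_half_inner_of_norm_add_le hμ hK hTlow hTup hθ hu hp, ?_⟩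
  have hg := (LinearMap.isPositive_of_mul_norm_sq_le hT hμ.le hTlow).norm_apply_sq_le hK hTup
    (Matrix.toEuclideanLin H⁻¹ g)
  rw [hu] at hg
  rw [neg_div, neg_mul, neg_le_neg_iff, div_le_iff₀ (by positivity)]
  linarith
end

section
/- Let H be a symmetric p×p matrix with μ·I ⪯ H ⪯ K̂·I for some 0 < μ ≤ K̂, let g ∈ ℝ^p, 0 ≤ θ₁ < 1, 0 ≤ θ₂ < 1, and let p ∈ ℝ^p satisfy ‖Hp + g‖ ≤ θ₁‖g‖ and pᵀg ≤ −(1−θ₂) pᵀHp. Then pᵀg ≤ −(1−θ₂) μ (1−θ₁)² ‖g‖² / K̂². -/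
/-!
Write `q = Hp`. Since `0 ⪯ H ⪯ K̂ I`, conjugating by `√H` gives `H² ⪯ K̂ H`, i.e.
`‖q‖² ≤ K̂ pᵀq`. The residual condition and the triangle inequality give `(1 - θ₁)‖g‖ ≤ ‖q‖`,
hence `pᵀHp ≥ (1 - θ₁)²‖g‖² / K̂ ≥ μ (1 - θ₁)²‖g‖² / K̂²`, and the descent condition
turns this into the claimed bound.
-/

open scoped RealInnerProductSpace

theorem mul_self_le_smul_of_le_smul_one {R : Type*} [Ring R] [PartialOrder R] [StarRing R]
    [StarOrderedRing R] [Module ℝ R] [IsScalarTower ℝ R R] [SMulCommClass ℝ R R]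
    {a s : R} {K : ℝ} (hs : IsSelfAdjoint s) (hsa : s * s = a) (h : a ≤ K • 1) :
    a * a ≤ K • a :=
  calc a * a = s * a * s := by rw [← hsa]; simp only [mul_assoc]
    _ ≤ s * (K • 1) * s := hs.conjugate_le_conjugate h
    _ = K • a := by rw [← hsa, mul_smul_comm, mul_one, smul_mul_assoc]

open scoped MatrixOrder in
theorem Matrix.PosSemidef.smul_sub_mul_self {n : Type*} [Fintype n] [DecidableEq n]
    {H : Matrix n n ℝ} {K : ℝ} (hH : H.PosSemidef) (hHK : (K • 1 - H).PosSemidef) :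
    (K • H - H * H).PosSemidef :=
  mul_self_le_smul_of_le_smul_one (CFC.sqrt_nonneg H).isSelfAdjoint
    (CFC.sqrt_mul_sqrt_self H hH.nonneg) hHK

theorem Matrix.norm_toEuclideanLin_sq_le {n : Type*} [Fintype n] [DecidableEq n]
    {H : Matrix n n ℝ} {K : ℝ} (hH : H.IsSymm) (hHK : (K • H - H * H).PosSemidef)
    (x : EuclideanSpace ℝ n) :
    ‖H.toEuclideanLin x‖ ^ 2 ≤ K * ⟪x, H.toEuclideanLin x⟫ := by
  have h := hHK.dotProduct_mulVec_nonneg x.ofLp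
  rw [star_trivial, sub_mulVec, dotProduct_sub, smul_mulVec, dotProduct_smul, ← mulVec_mulVec,
    dotProduct_mulVec x.ofLp H (H.mulVec x.ofLp), ← mulVec_transpose, hH.eq, smul_eq_mul,
    sub_nonneg] at h
  rw [← real_inner_self_eq_norm_sq]
  simpa only [← coe_toEuclideanCLM_eq_toEuclideanLin, ContinuousLinearMap.coe_coe,
    inner_toEuclideanCLM, ofLp_toEuclideanCLM] using h

theorem sub_mul_norm_le_norm_of_norm_add_le {E : Type*} [SeminormedAddCommGroup E] {q g : E}
    {θ : ℝ} (h : ‖q + g‖ ≤ θ * ‖g‖) : (1 - θ) * ‖g‖ ≤ ‖q‖ := by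
  have := norm_sub_le (q + g) q
  rw [add_sub_cancel_left] at this
  linarith

theorem stmt_15_general {d : ℕ} (H : Matrix (Fin d) (Fin d) ℝ) (μ Khat θ₁ θ₂ : ℝ)
    (g p : EuclideanSpace ℝ (Fin d))
    -- `H` is symmetric with `μ I ⪯ H ⪯ Khat I`, `0 < μ ≤ Khat`
    (hμ : 0 < μ) (hμK : μ ≤ Khat)
    (hlow : (H - μ • (1 : Matrix (Fin d) (Fin d) ℝ)).PosSemidef)
    (hup : (Khat • (1 : Matrix (Fin d) (Fin d) ℝ) - H).PosSemidef)
    (hθ₁1 : θ₁ < 1) (hθ₂1 : θ₂ < 1)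
    -- `‖Hp + g‖ ≤ θ₁ ‖g‖` and `pᵀg ≤ -(1-θ₂) pᵀHp`
    (hp₁ : ‖Matrix.toEuclideanLin H p + g‖ ≤ θ₁ * ‖g‖)
    (hp₂ : ⟪p, g⟫ ≤ -(1 - θ₂) * ⟪p, Matrix.toEuclideanLin H p⟫) :
    -- `pᵀg ≤ -(1-θ₂) μ (1-θ₁)² ‖g‖² / Khat²`
    ⟪p, g⟫ ≤ -(1 - θ₂) * μ * (1 - θ₁) ^ 2 * ‖g‖ ^ 2 / Khat ^ 2 := by
  set q := Matrix.toEuclideanLin H p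
  have hK : 0 < Khat := hμ.trans_le hμK
  have hH : H.PosSemidef := by simpa using hlow.add (Matrix.PosSemidef.one.smul hμ.le)
  have hq : ‖q‖ ^ 2 ≤ Khat * ⟪p, q⟫ :=
    Matrix.norm_toEuclideanLin_sq_le hH.isHermitian (hH.smul_sub_mul_self hup) p
  have hgq : (1 - θ₁) * ‖g‖ ≤ ‖q‖ := sub_mul_norm_le_norm_of_norm_add_le hp₁
  have hgq₀ : 0 ≤ (1 - θ₁) * ‖g‖ := mul_nonneg (by linarith) (norm_nonneg g)
  have hpq : μ * (1 - θ₁) ^ 2 * ‖g‖ ^ 2 / Khat ^ 2 ≤ ⟪p, q⟫ :=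
    calc μ * (1 - θ₁) ^ 2 * ‖g‖ ^ 2 / Khat ^ 2 = μ * ((1 - θ₁) * ‖g‖) ^ 2 / Khat ^ 2 := by ring
      _ ≤ Khat * ‖q‖ ^ 2 / Khat ^ 2 := by gcongr
      _ ≤ Khat * (Khat * ⟪p, q⟫) / Khat ^ 2 := by gcongr
      _ = ⟪p, q⟫ := by field_simp
  calc ⟪p, g⟫ ≤ -(1 - θ₂) * ⟪p, q⟫ := hp₂
    _ ≤ -(1 - θ₂) * (μ * (1 - θ₁) ^ 2 * ‖g‖ ^ 2 / Khat ^ 2) :=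
      mul_le_mul_of_nonpos_left hpq (by linarith)
    _ = -(1 - θ₂) * μ * (1 - θ₁) ^ 2 * ‖g‖ ^ 2 / Khat ^ 2 := by ring

theorem stmt_15 {d : ℕ} (H : Matrix (Fin d) (Fin d) ℝ) (μ Khat θ₁ θ₂ : ℝ)
    (g p : EuclideanSpace ℝ (Fin d))
    -- `H` is symmetric with `μ I ⪯ H ⪯ Khat I`, `0 < μ ≤ Khat`
    (hHsym : H.IsSymm) (hμ : 0 < μ) (hμK : μ ≤ Khat)
    (hlow : (H - μ • (1 : Matrix (Fin d) (Fin d) ℝ)).PosSemidef)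
    (hup : (Khat • (1 : Matrix (Fin d) (Fin d) ℝ) - H).PosSemidef)
    (hθ₁0 : 0 ≤ θ₁) (hθ₁1 : θ₁ < 1) (hθ₂0 : 0 ≤ θ₂) (hθ₂1 : θ₂ < 1)
    -- `‖Hp + g‖ ≤ θ₁ ‖g‖` and `pᵀg ≤ -(1-θ₂) pᵀHp`
    (hp₁ : ‖Matrix.toEuclideanLin H p + g‖ ≤ θ₁ * ‖g‖)
    (hp₂ : ⟪p, g⟫ ≤ -(1 - θ₂) * ⟪p, Matrix.toEuclideanLin H p⟫) :
    -- `pᵀg ≤ -(1-θ₂) μ (1-θ₁)² ‖g‖² / Khat²`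
    ⟪p, g⟫ ≤ -(1 - θ₂) * μ * (1 - θ₁) ^ 2 * ‖g‖ ^ 2 / Khat ^ 2 :=
  stmt_15_general H μ Khat θ₁ θ₂ g p hμ hμK hlow hup hθ₁1 hθ₂1 hp₁ hp₂
end
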